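/- arXiv:2410.03373 — 2 statements merged into one kernel-verified Lean document; each statement's English description precedes it below -/
import Mathlib

section
/- Let A(t) = a₀ + Σ_{i=1}^n a_i t_i be an affine function on I^n = [−1,1]^n, S = Σ|a_i| > 0, M = a₀ + S, and suppose 0 ∈ A(I^n) (i.e. a₀ − S ≤ 0 ≤ a₀ + S). For τ ∈ [0,1], let B̃(t) = b̃₀ + c·Σ a_i t_i with b̃₀ = τM/2 and c = τM/(2S). Then max over t ∈ I^n of (ReLU(A(t)) − B̃(t)) = M(1 − τ). -/
/-- Upper error of the affine approximation `B̃(t) = τM/2 + c Σ aᵢ tᵢ` of `ReLU ∘ A` on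
the cube `[-1,1]^n`, where `A(t) = a₀ + Σ aᵢ tᵢ`, `S = Σ|aᵢ| > 0`, `M = a₀ + S`,
`0 ∈ A([-1,1]^n)`, `τ ∈ [0,1]`, `c = τM/(2S)` (with `τM ≤ 2S` so that `0 ≤ c ≤ 1`):
the maximum of `ReLU(A(t)) - B̃(t)` equals `M(1-τ)`. -/
theorem relu_affine_approx_max (n : ℕ) (a₀ : ℝ) (a : Fin n → ℝ)
    (S M τ c : ℝ)
    (hS : S = ∑ i, |a i|) (hSpos : 0 < S) (hM : M = a₀ + S)
    (hzero : a₀ - S ≤ 0 ∧ 0 ≤ a₀ + S)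
    (hτ : τ ∈ Set.Icc (0 : ℝ) 1) (hτM : τ * M ≤ 2 * S)
    (hc : c = τ * M / (2 * S)) :
    IsGreatest
      ((fun t => max (a₀ + ∑ i, a i * t i) 0 - (τ * M / 2 + c * ∑ i, a i * t i)) ''
        {t : Fin n → ℝ | ∀ i, t i ∈ Set.Icc (-1 : ℝ) 1})
      (M * (1 - τ)) := by
  obtain ⟨hτ0, hτ1⟩ := hτ
  have hM0 : 0 ≤ M := hM ▸ hzero.2
  have hc0 : 0 ≤ c := by
    rw [hc]; positivity
  have hc1 : c ≤ 1 := by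
    rw [hc, div_le_one (by linarith)]; exact hτM
  have hcS : c * S = τ * M / 2 := by
    rw [hc]; field_simp
  constructor
  · -- membership: use t i = if 0 ≤ a i then 1 else -1
    refine ⟨fun i => if 0 ≤ a i then 1 else -1, ?_, ?_⟩
    · intro i
      by_cases h : 0 ≤ a i <;> simp [h]
    · have hsum : (∑ i, a i * (if 0 ≤ a i then (1:ℝ) else -1)) = S := by
        rw [hS]
        refine Finset.sum_congr rfl fun i _ => ?_
        by_cases h : 0 ≤ a i
        · simp [h, abs_of_nonneg h]
        · simp [h, abs_of_neg (lt_of_not_ge h)]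
      simp only [hsum]
      rw [max_eq_left (by linarith), hcS]
      linarith
  · rintro y ⟨t, ht, rfl⟩
    simp only
    have habs : |∑ i, a i * t i| ≤ S := by
      rw [hS]
      refine (Finset.abs_sum_le_sum_abs _ _).trans (Finset.sum_le_sum fun i _ => ?_)
      rw [abs_mul]
      calc |a i| * |t i| ≤ |a i| * 1 :=
            mul_le_mul_of_nonneg_left (abs_le.mpr ⟨(ht i).1, (ht i).2⟩) (abs_nonneg _)
        _ = |a i| := mul_one _
    have hx1 : (∑ i, a i * t i) ≤ S := (le_abs_self _).trans habs
    have hx2 : -S ≤ (∑ i, a i * t i) := neg_le_of_abs_le habs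
    set x := ∑ i, a i * t i with hxdef
    rcases max_cases (a₀ + x) 0 with ⟨heq, _⟩ | ⟨heq, _⟩ <;> rw [heq]
    · -- (a₀+x) - τM/2 - c x ≤ M(1-τ)
      nlinarith [mul_le_mul_of_nonneg_left hx1 (sub_nonneg.mpr hc1)]
    · nlinarith [mul_le_mul_of_nonneg_left hx2 hc0, mul_nonneg (sub_nonneg.mpr hτ1) hM0]
end

section
/- Under the setup of the previous statement (A affine on I^n with 0 ∈ A(I^n), S = Σ|a_i| > 0, M = a₀ + S ≥ 0, τ ∈ [0,1], c = τM/(2S), b̃₀ = τM/2, B̃(t) = b̃₀ + cΣa_i t_i, and τM ≤ 2S so that 0 ≤ c ≤ 1), the minimum over t ∈ I^n of (ReLU(A(t)) − B̃(t)) equals c·a₀ − τM/2. -/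
/-- Lower error of the affine approximation `B̃(t) = τM/2 + c Σ aᵢ tᵢ` of `ReLU ∘ A` on
the cube `[-1,1]^n` (same setup as the max statement): the minimum of
`ReLU(A(t)) - B̃(t)` equals `c·a₀ - τM/2`. -/
theorem relu_affine_approx_min (n : ℕ) (a₀ : ℝ) (a : Fin n → ℝ)
    (S M τ c : ℝ)
    (hS : S = ∑ i, |a i|) (hSpos : 0 < S) (hM : M = a₀ + S)
    (hzero : a₀ - S ≤ 0 ∧ 0 ≤ a₀ + S)
    (hτ : τ ∈ Set.Icc (0 : ℝ) 1) (hτM : τ * M ≤ 2 * S)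
    (hc : c = τ * M / (2 * S)) :
    IsLeast
      ((fun t => max (a₀ + ∑ i, a i * t i) 0 - (τ * M / 2 + c * ∑ i, a i * t i)) ''
        {t : Fin n → ℝ | ∀ i, t i ∈ Set.Icc (-1 : ℝ) 1})
      (c * a₀ - τ * M / 2) := by
  have hMnn : 0 ≤ M := by rw [hM]; exact hzero.2
  have hcnn : 0 ≤ c := by
    rw [hc]; exact div_nonneg (mul_nonneg hτ.1 hMnn) (by linarith)
  have hc1 : c ≤ 1 := by
    rw [hc]
    rw [div_le_one (by linarith)]
    exact hτM
  have habs : |a₀| ≤ S := abs_le.mpr ⟨by linarith [hzero.2], by linarith [hzero.1]⟩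
  constructor
  · -- witness t i = -(a₀/S) * sign (a i)
    refine ⟨fun i => -(a₀ / S) * Real.sign (a i), ?_, ?_⟩
    · intro i
      have h1 : |(-(a₀ / S) * Real.sign (a i))| ≤ 1 := by
        rw [abs_mul, abs_neg, abs_div, abs_of_pos hSpos]
        have hs : |Real.sign (a i)| ≤ 1 := by
          rcases lt_trichotomy (a i) 0 with h | h | h
          · rw [Real.sign_of_neg h]; norm_num
          · rw [h, Real.sign_zero]; norm_num
          · rw [Real.sign_of_pos h]; norm_num
        have h2 : |a₀| / S ≤ 1 := by
          rw [div_le_one hSpos]; exact habs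
        calc |a₀| / S * |Real.sign (a i)| ≤ |a₀| / S * 1 := by
              apply mul_le_mul_of_nonneg_left hs; positivity
          _ ≤ 1 := by simpa using h2
      exact abs_le.mp h1
    · have hsum : ∑ i, a i * (-(a₀ / S) * Real.sign (a i)) = -a₀ := by
        have : ∀ i, a i * (-(a₀ / S) * Real.sign (a i)) = -(a₀ / S) * |a i| := by
          intro i
          have : a i * Real.sign (a i) = |a i| := by
            rcases lt_trichotomy (a i) 0 with h | h | h
            · rw [Real.sign_of_neg h, abs_of_neg h]; ring
            · simp [h]
            · rw [Real.sign_of_pos h, abs_of_pos h]; ring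
          calc a i * (-(a₀ / S) * Real.sign (a i))
              = -(a₀ / S) * (a i * Real.sign (a i)) := by ring
            _ = -(a₀ / S) * |a i| := by rw [this]
        rw [Finset.sum_congr rfl fun i _ => this i, ← Finset.mul_sum, ← hS]
        field_simp
      simp only [hsum]
      rw [show a₀ + -a₀ = 0 by ring, max_self]
      ring
  · rintro v ⟨t, ht, rfl⟩
    simp only
    set X := ∑ i, a i * t i with hX
    have key : c * (a₀ + X) ≤ max (a₀ + X) 0 := by
      rcases le_or_gt 0 (a₀ + X) with h | h
      · calc c * (a₀ + X) ≤ 1 * (a₀ + X) := mul_le_mul_of_nonneg_right hc1 h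
          _ ≤ max (a₀ + X) 0 := by simp
      · calc c * (a₀ + X) ≤ 0 := mul_nonpos_of_nonneg_of_nonpos hcnn h.le
          _ ≤ max (a₀ + X) 0 := le_max_right _ _
    linarith [key]
end
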